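/- Let n ≥ 2, a ∈ ℂ nonzero, B a positive-definite hermitian (n−1)×(n−1) complex matrix, and Q the (n+1)×(n+1) block matrix [[0,0,a],[0,B,0],[ā,0,0]]. The set of unipotent matrices g ∈ GL(n+1,ℂ) (i.e. g − I is nilpotent) satisfying g†Qg = Q and g(ℂe_1) = ℂe_1 is exactly the set of block matrices g = [[1,v,w],[0,I_{n−1},y],[0,0,1]] — with w ∈ ℂ, v a row vector and y a column vector in ℂ^{n−1} — satisfying B·y + v†·a = 0 and y†By + ā·w + a·w̄ = 0. In particular, any unipotent X with X†BX = B for a positive-definite hermitian B equals the identity. -/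

import Mathlib

/-!
A unipotent `g` fixing the line `ℂ e₁` has first column `e₁` (its only eigenvalue is `1`).
The first row of `gᴴ Q g = Q` then reads `a · (last row of g) = (0, 0, a)`, so `g` is block upper
triangular and its middle block `A` is unipotent with `Aᴴ B A = B`. For positive definite `B`
this forces `A = 1`: if `N = A - 1` has `N ^ (k + 2) = 0`, then `W = N ^ (k + 1)` is fixed by `A`
while `A` sends `V = N ^ k` to `V + W`, so invariance of the form gives `Wᴴ B W = 0`, i.e. `W = 0`.
Once `g` has the block shape `[[1, v, w], [0, 1, y], [0, 0, 1]]`, the two relations are the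
`(2, 3)` and `(3, 3)` blocks of `gᴴ Q g = Q`.
-/

open scoped ComplexOrder

namespace Matrix

variable {ι κ m R : Type*}

theorem PosDef.eq_zero_of_conjTranspose_mul_mul_eq_zero [Fintype ι] [Ring R] [PartialOrder R]
    [StarRing R] {B : Matrix ι ι R} (hB : B.PosDef) {W : Matrix ι κ R} (h : Wᴴ * B * W = 0) :
    W = 0 := by
  ext i j
  by_contra hij
  have hcol : (fun i => W i j) ≠ 0 := fun h0 => hij (congrFun h0 i)
  have hdiag : star (fun i => W i j) ⬝ᵥ B *ᵥ (fun i => W i j) = (Wᴴ * B * W) j j := by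
    rw [dotProduct_mulVec]
    simp [mul_apply, dotProduct, vecMul, conjTranspose_apply]
  exact (hB.dotProduct_mulVec_pos hcol).ne' (by rw [hdiag, h, zero_apply])

theorem PosDef.eq_one_of_isNilpotent_sub_one [Fintype ι] [DecidableEq ι] [Ring R]
    [PartialOrder R] [StarRing R] {B X : Matrix ι ι R} (hB : B.PosDef)
    (hX : IsNilpotent (X - 1)) (hXB : Xᴴ * B * X = B) : X = 1 := by
  set N := X - 1
  have hXN : X = 1 + N := by simp [N]
  have step : ∀ k, N ^ (k + 2) = 0 → N ^ (k + 1) = 0 := by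
    intro k hk
    have hXW : X * N ^ (k + 1) = N ^ (k + 1) := by
      rw [hXN, add_mul, one_mul, ← pow_succ', hk, add_zero]
    have hXV : X * N ^ k = N ^ k + N ^ (k + 1) := by rw [hXN, add_mul, one_mul, ← pow_succ']
    apply hB.eq_zero_of_conjTranspose_mul_mul_eq_zero
    calc (N ^ (k + 1))ᴴ * B * N ^ (k + 1)
        = (X * N ^ (k + 1))ᴴ * B * (X * N ^ k) - (N ^ (k + 1))ᴴ * B * N ^ k := by
          rw [hXW, hXV]; noncomm_ring
      _ = (N ^ (k + 1))ᴴ * (Xᴴ * B * X) * N ^ k - (N ^ (k + 1))ᴴ * B * N ^ k := by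
          rw [conjTranspose_mul]; noncomm_ring
      _ = 0 := by rw [hXB, sub_self]
  have hpow : ∀ k, N ^ (k + 1) = 0 → N = 0 := by
    intro k
    induction k with
    | zero => simp
    | succ k ih => exact fun h => ih (step k h)
  obtain ⟨k, hk⟩ := hX
  exact sub_eq_zero.mp (hpow k (by rw [pow_succ, hk, zero_mul]))

section BlockTriangular

variable {α : Type*} [LinearOrder α] {b : ι → α} {e : κ → ι} {β : α}

theorem BlockTriangular.submatrix_mul [Fintype ι] [Fintype κ] [NonUnitalNonAssocSemiring R]
    {M N : Matrix ι ι R} (hM : M.BlockTriangular b) (hN : N.BlockTriangular b)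
    (he : Function.Injective e) (hbe : ∀ i, b i = β ↔ i ∈ Set.range e) :
    (M * N).submatrix e e = M.submatrix e e * N.submatrix e e := by
  classical
  ext i j
  simp only [submatrix_apply, mul_apply]
  symm
  calc ∑ k, M (e i) (e k) * N (e k) (e j)
      = ∑ l ∈ Finset.univ.image e, M (e i) l * N l (e j) :=
        (Finset.sum_image (f := fun l => M (e i) l * N l (e j)) fun _ _ _ _ h => he h).symm
    _ = ∑ l, M (e i) l * N l (e j) :=
        Finset.sum_subset (Finset.subset_univ _) fun l _ hl => ?_
  have hbl : b l ≠ β := fun h => hl (by simpa using (hbe l).1 h)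
  have hbe' : ∀ k, b (e k) = β := fun k => (hbe _).2 ⟨k, rfl⟩
  rcases hbl.lt_or_gt with h | h
  · rw [hM (by rwa [hbe']), zero_mul]
  · rw [hN (by rwa [hbe']), mul_zero]

theorem BlockTriangular.submatrix_pow [Fintype ι] [DecidableEq ι] [Fintype κ] [DecidableEq κ]
    [Semiring R] {M : Matrix ι ι R} (hM : M.BlockTriangular b)
    (he : Function.Injective e) (hbe : ∀ i, b i = β ↔ i ∈ Set.range e) (k : ℕ) :
    (M ^ k).submatrix e e = M.submatrix e e ^ k := by
  induction k with
  | zero => exact submatrix_one e he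
  | succ k ih => rw [pow_succ, (hM.pow k).submatrix_mul hM he hbe, ih, pow_succ]

theorem BlockTriangular.isNilpotent_submatrix [Fintype ι] [DecidableEq ι] [Fintype κ]
    [DecidableEq κ] [Semiring R] {M : Matrix ι ι R} (hM : M.BlockTriangular b)
    (he : Function.Injective e) (hbe : ∀ i, b i = β ↔ i ∈ Set.range e) (hMn : IsNilpotent M) :
    IsNilpotent (M.submatrix e e) := by
  obtain ⟨k, hk⟩ := hMn
  exact ⟨k, by rw [← hM.submatrix_pow he hbe, hk]; rfl⟩

end BlockTriangular

theorem mulVec_eq_self_of_isNilpotent_sub_one [Fintype ι] [DecidableEq ι] [CommRing R]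
    [IsDomain R] {g : Matrix ι ι R} (hg : IsNilpotent (g - 1)) {x : ι → R} (hx : x ≠ 0)
    (hgx : g *ᵥ x ∈ Submodule.span R {x}) : g *ᵥ x = x := by
  obtain ⟨c, hc⟩ := Submodule.mem_span_singleton.mp hgx
  have hev : Module.End.HasEigenvector (toLin' (g - 1)) (c - 1) x := by
    refine ⟨Module.End.mem_eigenspace_iff.mpr ?_, hx⟩
    rw [toLin'_apply, sub_mulVec, ← hc, one_mulVec, sub_smul, one_smul]
  have hnil : IsNilpotent (toLin' (g - 1)) := hg.map toLinAlgEquiv'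
  have hc1 : c = 1 := sub_eq_zero.mp
    (Module.End.hasEigenvalue_of_hasEigenvector hev |>.isNilpotent_of_isNilpotent hnil).eq_zero
  rw [← hc, hc1, one_smul]

section SiegelForm

variable [CommRing R] [StarRing R]

def siegelForm (a : R) (B : Matrix m m R) :
    Matrix (Fin 1 ⊕ (m ⊕ Fin 1)) (Fin 1 ⊕ (m ⊕ Fin 1)) R :=
  fromBlocks 0 (fromCols 0 (of fun _ _ => a)) (fromRows 0 (of fun _ _ => star a))
    (fromBlocks B 0 0 0)

theorem conjTranspose_mul_siegelForm_mul_apply [Fintype m] (a : R) (B : Matrix m m R)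
    (g : Matrix (Fin 1 ⊕ (m ⊕ Fin 1)) (Fin 1 ⊕ (m ⊕ Fin 1)) R) (i j) :
    (gᴴ * siegelForm a B * g) i j =
      star (g (Sum.inl 0) i) * a * g (Sum.inr (Sum.inr 0)) j
        + star (g (Sum.inr (Sum.inr 0)) i) * star a * g (Sum.inl 0) j
        + ∑ k, ∑ l, star (g (Sum.inr (Sum.inl k)) i) * B k l * g (Sum.inr (Sum.inl l)) j := by
  simp only [siegelForm, mul_apply, conjTranspose_apply, Fintype.sum_sum_type, Finset.univ_unique,
    Fin.default_eq_zero, Finset.sum_singleton, add_mul, Finset.sum_mul, fromBlocks_apply₁₁,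
    fromBlocks_apply₁₂, fromBlocks_apply₂₁, fromBlocks_apply₂₂, fromRows_apply_inl,
    fromRows_apply_inr, fromCols_apply_inl, fromCols_apply_inr, of_apply, zero_apply, mul_zero,
    zero_mul, Finset.sum_const_zero, zero_add, add_zero]
  rw [Finset.sum_comm]
  ring

end SiegelForm

section Heisenberg

variable [Fintype m] [DecidableEq m] [CommRing R]

def heisenbergMatrix (v : m → R) (w : R) (y : m → R) :
    Matrix (Fin 1 ⊕ (m ⊕ Fin 1)) (Fin 1 ⊕ (m ⊕ Fin 1)) R :=
  fromBlocks 1 (fromCols (replicateRow (Fin 1) v) (of fun _ _ => w)) 0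
    (fromBlocks 1 (replicateCol (Fin 1) y) 0 1)

theorem isNilpotent_heisenbergMatrix_sub_one (v : m → R) (w : R) (y : m → R) :
    IsNilpotent (heisenbergMatrix v w y - 1) := by
  refine ⟨3, ?_⟩
  ext (i | i | i) (j | j | j) <;>
    simp [pow_succ, mul_apply, Fintype.sum_sum_type, heisenbergMatrix, one_apply,
      eq_iff_true_of_subsingleton]

theorem heisenbergMatrix_mulVec_single (v : m → R) (w : R) (y : m → R) :
    heisenbergMatrix v w y *ᵥ Pi.single (Sum.inl 0) 1 = Pi.single (Sum.inl 0) 1 := by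
  ext (i | i | i) <;>
    simp [heisenbergMatrix, Pi.single_apply, one_apply, eq_iff_true_of_subsingleton]

variable [StarRing R]

theorem conjTranspose_mul_siegelForm_mul_heisenbergMatrix_eq_iff {a : R} {B : Matrix m m R}
    (hB : B.IsHermitian) (v : m → R) (w : R) (y : m → R) :
    (heisenbergMatrix v w y)ᴴ * siegelForm a B * heisenbergMatrix v w y = siegelForm a B ↔
      B *ᵥ y + a • star v = 0 ∧
        star y ⬝ᵥ B *ᵥ y + starRingEnd R a * w + a * starRingEnd R w = 0 := by
  have hmulVec : B *ᵥ y + a • star v = 0 ↔ ∀ k, star (v k) * a + ∑ l, B k l * y l = 0 := by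
    simp only [funext_iff, Pi.add_apply, mulVec, dotProduct, Pi.smul_apply, Pi.star_apply,
      smul_eq_mul, Pi.zero_apply]
    exact forall_congr' fun k => by rw [add_comm, mul_comm]
  have hdot : star y ⬝ᵥ B *ᵥ y + starRingEnd R a * w + a * starRingEnd R w = 0 ↔
      star w * a + star a * w + ∑ k, ∑ l, star (y k) * B k l * y l = 0 := by
    have hform : star y ⬝ᵥ B *ᵥ y = ∑ k, ∑ l, star (y k) * B k l * y l := by
      simp [dotProduct, mulVec, Finset.mul_sum, mul_assoc]
    rw [hform, starRingEnd_apply, starRingEnd_apply]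
    constructor <;> intro h <;> linear_combination h
  rw [hmulVec, hdot, ← Matrix.ext_iff]
  simp only [conjTranspose_mul_siegelForm_mul_apply]
  constructor
  · intro h
    refine ⟨fun k => ?_, ?_⟩
    · simpa [heisenbergMatrix, siegelForm, one_apply, apply_ite star] using
        h (Sum.inr (Sum.inl k)) (Sum.inr (Sum.inr 0))
    · simpa [heisenbergMatrix, siegelForm] using h (Sum.inr (Sum.inr 0)) (Sum.inr (Sum.inr 0))
  · rintro ⟨hy, hw⟩
    have hy_col : ∀ l, star a * v l + ∑ k, star (y k) * B k l = 0 := fun l => by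
      simpa [star_mul', hB.apply, mul_comm] using congrArg star (hy l)
    rintro (i | i | i) (j | j | j) <;>
      simp [heisenbergMatrix, siegelForm, one_apply, apply_ite star, Fin.fin_one_eq_zero, hy,
        hy_col, hw]

theorem exists_eq_heisenbergMatrix [PartialOrder R] [NoZeroDivisors R] {a : R} (ha : a ≠ 0)
    {B : Matrix m m R} (hB : B.PosDef)
    {g : Matrix (Fin 1 ⊕ (m ⊕ Fin 1)) (Fin 1 ⊕ (m ⊕ Fin 1)) R} (hg : IsNilpotent (g - 1))
    (hgQ : gᴴ * siegelForm a B * g = siegelForm a B)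
    (hge : g *ᵥ Pi.single (Sum.inl 0) 1 = Pi.single (Sum.inl 0) 1) :
    ∃ v w y, g = heisenbergMatrix v w y := by
  have hcol : ∀ i, g i (Sum.inl 0) = (Pi.single (Sum.inl 0) 1 : Fin 1 ⊕ (m ⊕ Fin 1) → R) i :=
    fun i => by simpa [mulVec_single_one] using congrFun hge i
  have hrow : ∀ j, a * g (Sum.inr (Sum.inr 0)) j = siegelForm a B (Sum.inl 0) j := fun j => by
    simpa [conjTranspose_mul_siegelForm_mul_apply, hcol] using congrFun (congrFun hgQ (Sum.inl 0)) j
  have hlast_mid : ∀ k, g (Sum.inr (Sum.inr 0)) (Sum.inr (Sum.inl k)) = 0 := fun k => by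
    simpa [siegelForm, ha] using hrow (Sum.inr (Sum.inl k))
  have hlast_last : g (Sum.inr (Sum.inr 0)) (Sum.inr (Sum.inr 0)) = 1 :=
    mul_left_cancel₀ ha (by simpa [siegelForm] using hrow (Sum.inr (Sum.inr 0)))
  set A := g.submatrix (Sum.inr ∘ Sum.inl) (Sum.inr ∘ Sum.inl)
  have hA : Aᴴ * B * A = B := by
    ext k l
    simpa [conjTranspose_mul_siegelForm_mul_apply, hlast_mid, siegelForm, mul_apply, A,
      Finset.sum_mul] using congrFun (congrFun hgQ (Sum.inr (Sum.inl k))) (Sum.inr (Sum.inl l))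
  have hA_nil : IsNilpotent (A - 1) := by
    set b : Fin 1 ⊕ (m ⊕ Fin 1) → ℕ := Sum.elim (fun _ => 0) (Sum.elim (fun _ => 1) fun _ => 2)
    have hgb : (g - 1).BlockTriangular b := by
      rintro (i | i | i) (j | j | j) h <;> simp [b, Fin.fin_one_eq_zero, hcol, hlast_mid] at h ⊢
    have hb : ∀ i, b i = 1 ↔ i ∈ Set.range (Sum.inr ∘ Sum.inl) := by
      rintro (i | i | i) <;> simp [b]
    have hsub : (g - 1).submatrix (Sum.inr ∘ Sum.inl) (Sum.inr ∘ Sum.inl) = A - 1 := by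
      ext k l
      simp [A, one_apply]
    exact hsub ▸ hgb.isNilpotent_submatrix (Sum.inr_injective.comp Sum.inl_injective) hb hg
  have hmid : ∀ k l, g (Sum.inr (Sum.inl k)) (Sum.inr (Sum.inl l)) = (1 : Matrix m m R) k l :=
    congrFun₂ (hB.eq_one_of_isNilpotent_sub_one hA_nil hA)
  refine ⟨fun k => g (Sum.inl 0) (Sum.inr (Sum.inl k)), g (Sum.inl 0) (Sum.inr (Sum.inr 0)),
    fun k => g (Sum.inr (Sum.inl k)) (Sum.inr (Sum.inr 0)), ?_⟩
  ext (i | i | i) (j | j | j) <;>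
    simp [Fin.fin_one_eq_zero, heisenbergMatrix, hcol, hlast_mid, hlast_last, hmid]

end Heisenberg

end Matrix

open Matrix

theorem stmt15
    (n : ℕ)
    (a : ℂ) (ha : a ≠ 0)
    (B : Matrix (Fin (n - 1)) (Fin (n - 1)) ℂ) (hB : B.PosDef)
    (Q : Matrix (Fin 1 ⊕ (Fin (n - 1) ⊕ Fin 1)) (Fin 1 ⊕ (Fin (n - 1) ⊕ Fin 1)) ℂ)
    (hQ : Q = fun i j => match i, j with
      | Sum.inl _, Sum.inr (Sum.inr _) => a
      | Sum.inr (Sum.inr _), Sum.inl _ => (starRingEnd ℂ) a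
      | Sum.inr (Sum.inl i'), Sum.inr (Sum.inl j') => B i' j'
      | _, _ => 0) :
    (∀ g : GL (Fin 1 ⊕ (Fin (n - 1) ⊕ Fin 1)) ℂ,
      (IsNilpotent
          ((g : Matrix (Fin 1 ⊕ (Fin (n - 1) ⊕ Fin 1)) (Fin 1 ⊕ (Fin (n - 1) ⊕ Fin 1)) ℂ) - 1) ∧
        (g : Matrix (Fin 1 ⊕ (Fin (n - 1) ⊕ Fin 1)) (Fin 1 ⊕ (Fin (n - 1) ⊕ Fin 1)) ℂ)ᴴ * Q *
          (g : Matrix (Fin 1 ⊕ (Fin (n - 1) ⊕ Fin 1)) (Fin 1 ⊕ (Fin (n - 1) ⊕ Fin 1)) ℂ) = Q ∧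
        Submodule.map
          (Matrix.mulVecLin
            (g : Matrix (Fin 1 ⊕ (Fin (n - 1) ⊕ Fin 1)) (Fin 1 ⊕ (Fin (n - 1) ⊕ Fin 1)) ℂ))
          (Submodule.span ℂ {Pi.single (Sum.inl 0) 1}) =
          Submodule.span ℂ {(Pi.single (Sum.inl 0) 1 : Fin 1 ⊕ (Fin (n - 1) ⊕ Fin 1) → ℂ)}) ↔
      ∃ (w : ℂ) (v y : Fin (n - 1) → ℂ),
        (g : Matrix (Fin 1 ⊕ (Fin (n - 1) ⊕ Fin 1)) (Fin 1 ⊕ (Fin (n - 1) ⊕ Fin 1)) ℂ) =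
          (fun i j => match i, j with
            | Sum.inl _, Sum.inl _ => 1
            | Sum.inl _, Sum.inr (Sum.inl j') => v j'
            | Sum.inl _, Sum.inr (Sum.inr _) => w
            | Sum.inr (Sum.inl i'), Sum.inr (Sum.inl j') => if i' = j' then 1 else 0
            | Sum.inr (Sum.inl i'), Sum.inr (Sum.inr _) => y i'
            | Sum.inr (Sum.inr _), Sum.inr (Sum.inr _) => 1
            | _, _ => 0) ∧
        B.mulVec y + a • star v = 0 ∧
        star y ⬝ᵥ B.mulVec y + (starRingEnd ℂ) a * w + a * (starRingEnd ℂ) w = 0) ∧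
    (∀ X : Matrix (Fin (n - 1)) (Fin (n - 1)) ℂ,
      IsNilpotent (X - 1) → Xᴴ * B * X = B → X = 1) := by
  replace hQ : Q = siegelForm a B := by
    rw [hQ]
    ext (i | i | i) (j | j | j) <;> simp [siegelForm]
  subst hQ
  refine ⟨fun g => ⟨fun ⟨hg, hgQ, hline⟩ => ?_, fun ⟨w, v, y, hgvwy, hrel⟩ => ?_⟩,
    fun X => hB.eq_one_of_isNilpotent_sub_one⟩
  · have hge := mulVec_eq_self_of_isNilpotent_sub_one hg (Pi.single_ne_zero_iff.mpr one_ne_zero)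
      (hline ▸ Submodule.mem_map_of_mem (Submodule.mem_span_singleton_self _))
    obtain ⟨v, w, y, hgvwy⟩ := exists_eq_heisenbergMatrix ha hB hg hgQ hge
    refine ⟨w, v, y, hgvwy.trans ?_,
      (conjTranspose_mul_siegelForm_mul_heisenbergMatrix_eq_iff hB.isHermitian v w y).mp
        (hgvwy ▸ hgQ)⟩
    ext (i | i | i) (j | j | j) <;> simp [heisenbergMatrix, Fin.fin_one_eq_zero, one_apply]
  · replace hgvwy : (g : Matrix _ _ ℂ) = heisenbergMatrix v w y := by
      rw [hgvwy]
      ext (i | i | i) (j | j | j) <;> simp [heisenbergMatrix, Fin.fin_one_eq_zero, one_apply]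
    rw [hgvwy, conjTranspose_mul_siegelForm_mul_heisenbergMatrix_eq_iff hB.isHermitian,
      Submodule.map_span, Set.image_singleton, mulVecLin_apply, heisenbergMatrix_mulVec_single]
    exact ⟨isNilpotent_heisenbergMatrix_sub_one v w y, hrel, rfl⟩
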